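/- arXiv:2412.08556 — 4 statements merged into one kernel-verified Lean document; each statement's English description precedes it below -/
import Mathlib

section
/- The strong product of a graph G of treewidth w with a path on ℓ+1 vertices has treewidth at most (ℓ+1)(w+1) − 1, i.e. O(ℓ·w). -/
/-- `G` has a tree decomposition of width at most `w`. -/
def hasTreewidthAtMost {V : Type*} (G : SimpleGraph V) (w : ℕ) : Prop :=
  ∃ (T : Type) (Tg : SimpleGraph T) (β : T → Set V),
    Tg.IsTree ∧
    (∀ v : V, ∃ x, v ∈ β x) ∧
    (∀ u v : V, G.Adj u v → ∃ x, u ∈ β x ∧ v ∈ β x) ∧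
    (∀ v : V, (Tg.induce {x | v ∈ β x}).Connected) ∧
    (∀ x, (β x).ncard ≤ w + 1)

/-- The strong product of two simple graphs. -/
def strongProd {α β : Type*} (G : SimpleGraph α) (H : SimpleGraph β) :
    SimpleGraph (α × β) where
  Adj p q := p ≠ q ∧ (p.1 = q.1 ∨ G.Adj p.1 q.1) ∧ (p.2 = q.2 ∨ H.Adj p.2 q.2)
  symm := ⟨by
    rintro p q ⟨h1, h2, h3⟩
    exact ⟨h1.symm, h2.imp Eq.symm (fun h => h.symm), h3.imp Eq.symm (fun h => h.symm)⟩⟩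
  loopless := ⟨fun p h => h.1 rfl⟩

theorem stmt7 {V : Type*} [Fintype V] (G : SimpleGraph V) (w ℓ : ℕ)
    (hG : hasTreewidthAtMost G w) :
    hasTreewidthAtMost (strongProd G (SimpleGraph.pathGraph (ℓ + 1)))
      ((ℓ + 1) * (w + 1) - 1) := by
  obtain ⟨T, Tg, β, hTree, hCov, hEdge, hConn, hSize⟩ := hG
  refine ⟨T, Tg, fun x => β x ×ˢ (Set.univ : Set (Fin (ℓ + 1))), hTree, ?_, ?_, ?_, ?_⟩
  · rintro ⟨v, i⟩
    obtain ⟨x, hx⟩ := hCov v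
    exact ⟨x, hx, trivial⟩
  · rintro ⟨u, i⟩ ⟨v, j⟩ ⟨hne, h1, h2⟩
    rcases h1 with h | h
    · obtain ⟨x, hx⟩ := hCov u
      exact ⟨x, ⟨hx, trivial⟩, ⟨h ▸ hx, trivial⟩⟩
    · obtain ⟨x, hu, hv⟩ := hEdge u v h
      exact ⟨x, ⟨hu, trivial⟩, ⟨hv, trivial⟩⟩
  · rintro ⟨v, i⟩
    have : {x | (v, i) ∈ β x ×ˢ (Set.univ : Set (Fin (ℓ + 1)))} = {x | v ∈ β x} := by
      ext x; simp
    rw [this]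
    exact hConn v
  · intro x
    have hfin : (β x).Finite := Set.toFinite _
    have h1 : (β x ×ˢ (Set.univ : Set (Fin (ℓ + 1)))).ncard
        = (β x).ncard * (Set.univ : Set (Fin (ℓ + 1))).ncard := by
      rw [← Nat.card_coe_set_eq, Nat.card_congr (Equiv.Set.prod _ _), Nat.card_prod,
        Nat.card_coe_set_eq, Nat.card_coe_set_eq]
    have h2 : (Set.univ : Set (Fin (ℓ + 1))).ncard = ℓ + 1 := by
      simp [Set.ncard_univ]
    have h3 : (β x).ncard * (ℓ + 1) ≤ (w + 1) * (ℓ + 1) :=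
      Nat.mul_le_mul_right _ (hSize x)
    have : (ℓ + 1) * (w + 1) - 1 + 1 = (ℓ + 1) * (w + 1) := by
      have : 1 ≤ (ℓ + 1) * (w + 1) := Nat.one_le_iff_ne_zero.mpr (by positivity)
      omega
    rw [this, h1, h2, Nat.mul_comm (ℓ + 1)]
    exact h3
end

section
/- Let (T, β) be a tree decomposition of a graph G' and let P_1, ..., P_k be vertex-disjoint paths in G'. Form β'' by adding, for each i, both endpoints of P_i to every bag that intersects P_i. Then (T, β'') is a tree decomposition of the graph G'' obtained from G' by adding an edge between the endpoints of each P_i, and every bag of β'' has size at most 3 times the size of the corresponding bag of β. -/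
/-- `(Tg, β)` is a tree decomposition of `G`. -/
def IsTreeDecomp {V T : Type*} (G : SimpleGraph V) (Tg : SimpleGraph T)
    (β : T → Set V) : Prop :=
  Tg.IsTree ∧
  (∀ v : V, ∃ x, v ∈ β x) ∧
  (∀ u v : V, G.Adj u v → ∃ x, u ∈ β x ∧ v ∈ β x) ∧
  (∀ v : V, (Tg.induce {x | v ∈ β x}).Connected)

open Classical in
lemma walk_bags_connected {V T : Type*} (G' : SimpleGraph V) (Tg : SimpleGraph T)
    (β : T → Set V)
    (hedge : ∀ u v : V, G'.Adj u v → ∃ x, u ∈ β x ∧ v ∈ β x)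
    (hconn : ∀ v : V, (Tg.induce {x | v ∈ β x}).Connected)
    {u v : V} (w : G'.Walk u v) :
    (Tg.induce {x | ∃ z ∈ w.support, z ∈ β x}).Connected := by
  induction w with
  | @nil w =>
    have h : {x | ∃ z ∈ (SimpleGraph.Walk.nil : G'.Walk w w).support, z ∈ β x}
        = {x | w ∈ β x} := by ext x; simp
    rw [h]; exact hconn w
  | @cons u u' v h p ih =>
    have hset : {x | ∃ z ∈ (SimpleGraph.Walk.cons h p).support, z ∈ β x}
        = {x | u ∈ β x} ∪ {x | ∃ z ∈ p.support, z ∈ β x} := by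
      ext x
      simp [SimpleGraph.Walk.support_cons, or_and_right, exists_or]
    rw [hset]
    apply SimpleGraph.induce_union_connected (hconn u).preconnected ih.preconnected
    obtain ⟨x, hx1, hx2⟩ := hedge u u' h
    exact ⟨x, hx1, u', p.start_mem_support, hx2⟩

theorem stmt8 {V T : Type*} [Fintype V] (G' : SimpleGraph V) (Tg : SimpleGraph T)
    (β : T → Set V) (hβ : IsTreeDecomp G' Tg β)
    (k : ℕ) (a b : Fin k → V) (P : ∀ i : Fin k, G'.Walk (a i) (b i))
    (hpath : ∀ i, (P i).IsPath)
    (hdisj : ∀ i j : Fin k, i ≠ j → ∀ v : V, v ∈ (P i).support → v ∉ (P j).support) :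
    IsTreeDecomp (G' ⊔ SimpleGraph.fromEdgeSet {e | ∃ i : Fin k, e = s(a i, b i)}) Tg
      (fun x => β x ∪ ⋃ i ∈ {i : Fin k | ∃ v ∈ β x, v ∈ (P i).support}, {a i, b i}) ∧
    ∀ x, (β x ∪ ⋃ i ∈ {i : Fin k | ∃ v ∈ β x, v ∈ (P i).support},
        ({a i, b i} : Set V)).ncard ≤ 3 * (β x).ncard := by
  classical
  obtain ⟨htree, hcover, hedge, hconn⟩ := hβ
  constructor
  · refine ⟨htree, fun v => (hcover v).imp fun x h => Or.inl h, ?_, ?_⟩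
    · -- edges
      intro u v huv
      rw [SimpleGraph.sup_adj] at huv
      rcases huv with huv | huv
      · obtain ⟨x, hx⟩ := hedge u v huv
        exact ⟨x, Or.inl hx.1, Or.inl hx.2⟩
      · rw [SimpleGraph.fromEdgeSet_adj] at huv
        obtain ⟨⟨i, hi⟩, hne⟩ := huv
        obtain ⟨x, hx⟩ := hcover (a i)
        have hxI : i ∈ {i : Fin k | ∃ v ∈ β x, v ∈ (P i).support} :=
          ⟨a i, hx, (P i).start_mem_support⟩
        have hax : a i ∈ β x ∪ ⋃ i ∈ {i : Fin k | ∃ v ∈ β x, v ∈ (P i).support}, {a i, b i} :=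
          Or.inr (Set.mem_biUnion hxI (by simp))
        have hbx : b i ∈ β x ∪ ⋃ i ∈ {i : Fin k | ∃ v ∈ β x, v ∈ (P i).support}, {a i, b i} :=
          Or.inr (Set.mem_biUnion hxI (by simp))
        rw [Sym2.eq_iff] at hi
        rcases hi with ⟨rfl, rfl⟩ | ⟨rfl, rfl⟩
        · exact ⟨x, hax, hbx⟩
        · exact ⟨x, hbx, hax⟩
    · -- connectivity
      intro v
      by_cases hv : ∃ i, v = a i ∨ v = b i
      · obtain ⟨i0, hv0⟩ := hv
        have hvsupp : v ∈ (P i0).support := by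
          rcases hv0 with rfl | rfl
          exacts [(P i0).start_mem_support, (P i0).end_mem_support]
        have hset : {x | v ∈ β x ∪ ⋃ i ∈ {i : Fin k | ∃ v ∈ β x, v ∈ (P i).support}, {a i, b i}}
            = {x | ∃ z ∈ (P i0).support, z ∈ β x} := by
          ext x
          simp only [Set.mem_setOf_eq, Set.mem_union, Set.mem_iUnion, exists_prop]
          constructor
          · rintro (hvb | ⟨i, ⟨z, hz1, hz2⟩, hvi⟩)
            · exact ⟨v, hvsupp, hvb⟩
            · have : v ∈ (P i).support := by
                rcases hvi with rfl | rfl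
                · exact (P i).start_mem_support
                · exact (P i).end_mem_support
              have hii : i = i0 := by
                by_contra hne
                exact hdisj i i0 hne v this hvsupp
              subst hii
              exact ⟨z, hz2, hz1⟩
          · rintro ⟨z, hz1, hz2⟩
            exact Or.inr ⟨i0, ⟨z, hz2, hz1⟩, by rcases hv0 with rfl | rfl <;> simp⟩
        rw [hset]
        exact walk_bags_connected G' Tg β hedge hconn (P i0)
      · have hset : {x | v ∈ β x ∪ ⋃ i ∈ {i : Fin k | ∃ v ∈ β x, v ∈ (P i).support}, {a i, b i}}
            = {x | v ∈ β x} := by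
          ext x
          simp only [Set.mem_setOf_eq, Set.mem_union, Set.mem_iUnion, exists_prop]
          constructor
          · rintro (h | ⟨i, _, hvi⟩)
            · exact h
            · exact absurd ⟨i, by rcases hvi with rfl | rfl <;> simp⟩ hv
          · exact Or.inl
        rw [hset]
        exact hconn v
  · -- cardinality
    intro x
    set I : Set (Fin k) := {i : Fin k | ∃ v ∈ β x, v ∈ (P i).support} with hI
    have hfin : (β x).Finite := Set.toFinite _
    -- injection I → β x
    have hIcard : I.ncard ≤ (β x).ncard := by
      set f : Fin k → V := fun i => if h : i ∈ I then h.choose else a i with hf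
      apply Set.ncard_le_ncard_of_injOn f
      · intro i hi
        have : f i = hi.choose := by simp [hf, hi]
        rw [this]
        exact hi.choose_spec.1
      · intro i hi j hj hij
        have hfi : f i ∈ (P i).support := by
          have : f i = hi.choose := by simp [hf, hi]
          rw [this]; exact hi.choose_spec.2
        have hfj : f j ∈ (P j).support := by
          have : f j = hj.choose := by simp [hf, hj]
          rw [this]; exact hj.choose_spec.2
        by_contra hne
        exact hdisj i j hne (f i) hfi (hij ▸ hfj)
    have hUcard : (⋃ i ∈ I, ({a i, b i} : Set V)).ncard ≤ 2 * I.ncard := by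
      have hIfin : I.Finite := Set.toFinite _
      have heq : (⋃ i ∈ I, ({a i, b i} : Set V))
          = ↑(hIfin.toFinset.biUnion fun i => ({a i, b i} : Finset V)) := by
        ext v
        simp only [Set.mem_iUnion, exists_prop, Finset.coe_biUnion, Set.Finite.coe_toFinset,
          Finset.coe_insert, Finset.coe_singleton, Set.mem_insert_iff, Set.mem_singleton_iff,
          Finset.mem_coe, Finset.mem_biUnion, Set.Finite.mem_toFinset, Finset.mem_insert,
          Finset.mem_singleton]
      rw [heq, Set.ncard_coe_finset]
      calc (hIfin.toFinset.biUnion fun i => ({a i, b i} : Finset V)).card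
          ≤ ∑ i ∈ hIfin.toFinset, ({a i, b i} : Finset V).card :=
            Finset.card_biUnion_le
        _ ≤ ∑ _i ∈ hIfin.toFinset, 2 := by
            apply Finset.sum_le_sum
            intro i _
            exact (Finset.card_insert_le _ _).trans (by simp)
        _ = 2 * hIfin.toFinset.card := by rw [Finset.sum_const, smul_eq_mul, mul_comm]
        _ = 2 * I.ncard := by rw [Set.ncard_eq_toFinset_card _ hIfin]
    calc (β x ∪ ⋃ i ∈ I, ({a i, b i} : Set V)).ncard
        ≤ (β x).ncard + (⋃ i ∈ I, ({a i, b i} : Set V)).ncard := Set.ncard_union_le _ _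
      _ ≤ (β x).ncard + 2 * I.ncard := by omega
      _ ≤ (β x).ncard + 2 * (β x).ncard := by omega
      _ = 3 * (β x).ncard := by ring
end

section
/- A MAPFCC instance ⟨G, A, s_0, t, d, ℓ⟩ is a yes-instance if and only if in the layered graph G_I (with ℓ+1 layers V_0,...,V_ℓ, each a copy of V(G), copy edges v_{i-1}v_i, and cross edges u_{i-1}v_i for uv ∈ E(G)) there exists a family of vertex-disjoint paths {P_a : a ∈ A} such that: (1) each P_a contains exactly one vertex from each layer; (2) P_a has endpoints s_0(a)_0 and t(a)_ℓ; (3) no two paths P_a, P_b use the pair of cross edges u_{i-1}v_i and v_{i-1}u_i for the same edge uv and the same i; and (4) for each i, the set of layer-i vertices used by the paths is d-connected in the copy of G on layer i. -/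
def commGraph {V : Type*} (G : SimpleGraph V) (d : ℕ) : SimpleGraph V where
  Adj u v := u ≠ v ∧ G.Reachable u v ∧ G.dist u v ≤ d
  symm := ⟨by
    rintro u v ⟨h1, h2, h3⟩
    exact ⟨h1.symm, h2.symm, by rwa [SimpleGraph.dist_comm]⟩⟩
  loopless := ⟨fun v h => h.1 rfl⟩

def dConnected {V : Type*} (G : SimpleGraph V) (d : ℕ) (W : Set V) : Prop :=
  ((commGraph G d).induce W).Connected

/- The family of vertex-disjoint layered paths in the time-expanded graph `G_I` is
encoded by functions `p a : ℕ → V`, where `(p a i, i)` is the unique vertex of the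
path `P_a` in layer `i`; consecutive layer vertices are joined by a copy edge
(`p a (i+1) = p a i`) or a cross edge (`G.Adj (p a i) (p a (i+1))`). -/
theorem stmt9 {V A : Type*} (G : SimpleGraph V) (s0 t : A → V) (d ℓ : ℕ)
    (hs0 : Function.Injective s0) (ht : Function.Injective t) :
    (∃ μ ≤ ℓ, ∃ s : ℕ → A → V, s 0 = s0 ∧ s μ = t ∧
        (∀ i < μ, ∀ a : A, s (i + 1) a = s i a ∨ G.Adj (s i a) (s (i + 1) a)) ∧
        (∀ i < μ, ¬ ∃ a b : A, a ≠ b ∧ s (i + 1) a = s i b ∧ s (i + 1) b = s i a ∧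
          G.Adj (s i a) (s i b)) ∧
        (∀ i ≤ μ, Function.Injective (s i)) ∧
        (∀ i ≤ μ, dConnected G d (Set.range (s i))))
    ↔
    (∃ p : A → ℕ → V,
        -- (2) endpoints of `P_a` are `s_0(a)_0` and `t(a)_ℓ`
        (∀ a : A, p a 0 = s0 a ∧ p a ℓ = t a) ∧
        -- (1) one vertex per layer, consecutive ones joined by a copy or cross edge
        (∀ a : A, ∀ i < ℓ, p a (i + 1) = p a i ∨ G.Adj (p a i) (p a (i + 1))) ∧
        -- vertex-disjointness of the paths
        (∀ a b : A, a ≠ b → ∀ i ≤ ℓ, p a i ≠ p b i) ∧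
        -- (3) no two paths use the two opposite cross edges of the same edge `uv`
        (¬ ∃ a b : A, a ≠ b ∧ ∃ i < ℓ, ∃ u v : V, G.Adj u v ∧
            p a i = u ∧ p a (i + 1) = v ∧ p b i = v ∧ p b (i + 1) = u) ∧
        -- (4) the layer-`i` vertices used by the paths form a `d`-connected set
        (∀ i ≤ ℓ, dConnected G d (Set.range (fun a => p a i)))) := by
  constructor
  · rintro ⟨μ, hμ, s, h0, hμt, hmove, hswap, hinj, hconn⟩
    refine ⟨fun a i => s (min i μ) a, ?_, ?_, ?_, ?_, ?_⟩
    · intro a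
      constructor
      · simp [Nat.min_eq_left (Nat.zero_le μ), h0]
      · simp [Nat.min_eq_right hμ, hμt]
    · intro a i _
      dsimp only
      rcases lt_or_ge i μ with h | h
      · rw [Nat.min_eq_left h.le, Nat.min_eq_left h]
        rcases hmove i h a with h' | h'
        · exact Or.inl h'
        · exact Or.inr h'
      · rw [Nat.min_eq_right h, Nat.min_eq_right (le_trans h (Nat.le_succ i))]
        exact Or.inl rfl
    · intro a b hab i _ h
      exact hab (hinj (min i μ) (min_le_right i μ) h)
    · rintro ⟨a, b, hab, i, hi, u, v, hadj, h1, h2, h3, h4⟩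
      dsimp only at h1 h2 h3 h4
      rcases lt_or_ge i μ with h | h
      · rw [Nat.min_eq_left h.le] at h1 h3
        rw [Nat.min_eq_left h] at h2 h4
        exact hswap i h ⟨a, b, hab, by rw [h2, h3], by rw [h4, h1],
          by rw [h1, h3]; exact hadj⟩
      · rw [Nat.min_eq_right h] at h1
        rw [Nat.min_eq_right (le_trans h (Nat.le_succ i))] at h2
        exact hadj.ne (h1 ▸ h2 ▸ rfl)
    · intro i _
      exact hconn (min i μ) (min_le_right i μ)
  · rintro ⟨p, hend, hmove, hdisj, hswap, hconn⟩
    refine ⟨ℓ, le_refl ℓ, fun i a => p a i, ?_, ?_, ?_, ?_, ?_, ?_⟩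
    · funext a; exact (hend a).1
    · funext a; exact (hend a).2
    · intro i hi a; exact hmove a i hi
    · rintro i hi ⟨a, b, hab, h1, h2, h3⟩
      exact hswap ⟨a, b, hab, i, hi, p a i, p b i, h3, rfl, h1, rfl, h2⟩
    · intro i hi a b h
      by_contra hab
      exact hdisj a b hab i hi h
    · intro i hi
      exact hconn i hi
end

section
/- In the hardness construction of Theorem 1 (makespan exactly 3, communication range d = 1), in any feasible solution and for every index i ∈ [k], there is a single p ∈ [n] such that all agents α^i_j (j ∈ [k] \ {i}) occupy vertices of the path P^i_p at turn 1. Abstractly: if k−1 tokens start on the vertices a^i_1,...,a^i_k of a path, must each move in one step to a vertex among n disjoint paths P^i_1,...,P^i_n where vertex v^i_{p,j} is adjacent only to a^i_j and consecutive vertices of P^i_p, and the occupied set at turn 1 must induce a connected subgraph while no token remains on any a^i_j, then all tokens lie on the same path P^i_p. -/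
theorem SimpleGraph.Reachable.mem_of_adj_closed {V : Type*} {G : SimpleGraph V} {S : Set V}
    (hS : ∀ x y, G.Adj x y → x ∈ S → y ∈ S) {u w : V} (h : G.Reachable u w) (hu : u ∈ S) :
    w ∈ S := by
  by_contra hw
  obtain ⟨p⟩ := h
  obtain ⟨d, -, hd_fst, hd_snd⟩ := p.exists_boundary_dart S hu hw
  exact hd_snd (hS _ _ d.adj hd_fst)

theorem stmt13_general {V ι : Type*} [Nonempty ι] (G : SimpleGraph V) (k n : ℕ)
    (a : Fin k → V) (v : Fin n → Fin k → V)
    -- v_{p,j} is adjacent only to a_j and to consecutive vertices of P_p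
    (hadj : ∀ p j x, G.Adj (v p j) x →
        x = a j ∨ ∃ j' : Fin k, (j'.1 = j.1 + 1 ∨ j.1 = j'.1 + 1) ∧ x = v p j')
    -- the tokens at turn 1: injectively placed on path vertices, none on an a_j
    (f : ι → V)
    (hf : ∀ i, ∃ p j, f i = v p j)
    (hnota : ∀ i j, f i ≠ a j)
    -- the occupied set induces a connected subgraph (d = 1 communication)
    (hconn : (G.induce (Set.range f)).Connected) :
    ∃ p : Fin n, ∀ i : ι, ∃ j : Fin k, f i = v p j := by
  obtain ⟨i₀⟩ := ‹Nonempty ι›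
  obtain ⟨p, j₀, hj₀⟩ := hf i₀
  refine ⟨p, fun i => ?_⟩
  have hclosed : ∀ x y : Set.range f, (G.induce (Set.range f)).Adj x y →
      x ∈ {x : Set.range f | ∃ j, x.1 = v p j} → y ∈ {y : Set.range f | ∃ j, y.1 = v p j} := by
    rintro x ⟨y, iy, rfl⟩ hxy ⟨j, hj⟩
    rw [SimpleGraph.comap_adj, Function.Embedding.subtype_apply, hj] at hxy
    rcases hadj p j _ hxy with hya | ⟨j', -, hy⟩
    · exact absurd hya (hnota iy j)
    · exact ⟨j', hy⟩
  exact (hconn.preconnected ⟨f i₀, i₀, rfl⟩ ⟨f i, i, rfl⟩).mem_of_adj_closed hclosed ⟨j₀, hj₀⟩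

theorem stmt13 {V ι : Type*} [Nonempty ι] (G : SimpleGraph V) (k n : ℕ)
    (a : Fin k → V) (v : Fin n → Fin k → V)
    -- distinct paths are vertex-disjoint, and each path has distinct vertices
    (hvinj : ∀ p p' j j', v p j = v p' j' → p = p' ∧ j = j')
    -- the paths are disjoint from the vertices a_1, ..., a_k
    (hav : ∀ p j j', v p j ≠ a j')
    -- v_{p,j} is adjacent only to a_j and to consecutive vertices of P_p
    (hadj : ∀ p j x, G.Adj (v p j) x →
        x = a j ∨ ∃ j' : Fin k, (j'.1 = j.1 + 1 ∨ j.1 = j'.1 + 1) ∧ x = v p j')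
    -- the tokens at turn 1: injectively placed on path vertices, none on an a_j
    (f : ι → V) (hfinj : Function.Injective f)
    (hf : ∀ i, ∃ p j, f i = v p j)
    (hnota : ∀ i j, f i ≠ a j)
    -- the occupied set induces a connected subgraph (d = 1 communication)
    (hconn : (G.induce (Set.range f)).Connected) :
    ∃ p : Fin n, ∀ i : ι, ∃ j : Fin k, f i = v p j :=
  stmt13_general G k n a v hadj f hf hnota hconn
end
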